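/- (Fundamental theorem of calculus for the parametric family.) Writing I(λ) = ∫_{0}^{π/2} arccos( cos θ / (1 + λ cos θ) ) dθ, one has I(2) − I(0) = ∫_{0}^{2} ( ∫_{0}^{π/2} cos²θ / ( (1 + s cos θ) · √( (1 + s cos θ)² − cos²θ ) ) dθ ) ds; explicitly, ∫_{0}^{π/2} arccos( cos θ / (1 + 2 cos θ) ) dθ − ∫_{0}^{π/2} arccos( cos θ ) dθ equals the stated double integral. -/

import Mathlib

open Real
open MeasureTheory Set

/-!
For fixed `c = cos θ ∈ [0, 1]`, the integrand is the `s`-derivative of `arccos (c / (1 + s c))`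
and is nonnegative. A nonnegative derivative is automatically integrable, so the fundamental
theorem of calculus evaluates the `s`-integral even for `c = 1`, where it is improper at `s = 0`;
nonnegativity also makes Tonelli's theorem available to exchange the two integrals.
-/

section IntervalIntegralSwap

variable {F : ℝ → ℝ → ℝ} {a b c d : ℝ}

lemma intervalIntegral_intervalIntegral_swap_of_nonneg (hab : a ≤ b) (hcd : c ≤ d)
    (hF : Measurable (Function.uncurry F)) (hF0 : ∀ x ∈ Ioc a b, ∀ y ∈ Ioc c d, 0 ≤ F x y)
    (hFx : ∀ y ∈ Ioc c d, IntervalIntegrable (F · y) volume a b)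
    (hFy : IntervalIntegrable (fun y => ∫ x in a..b, F x y) volume c d) :
    ∫ x in a..b, ∫ y in c..d, F x y = ∫ y in c..d, ∫ x in a..b, F x y := by
  apply intervalIntegral_intervalIntegral_swap
  rw [uIoc_of_le hab, uIoc_of_le hcd, IntegrableOn, Measure.volume_eq_prod,
    ← Measure.prod_restrict, integrable_prod_iff' hF.aestronglyMeasurable]
  have hnorm : ∀ y ∈ Ioc c d,
      ∫ x in Ioc a b, ‖F x y‖ = ∫ x in a..b, F x y := fun y hy => by
    rw [intervalIntegral.integral_of_le hab]
    exact setIntegral_congr_fun measurableSet_Ioc fun x hx => norm_of_nonneg (hF0 x hx y hy)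
  refine ⟨?_, ?_⟩
  · filter_upwards [ae_restrict_mem measurableSet_Ioc] with y hy
    exact ((intervalIntegrable_iff_integrableOn_Ioc_of_le hab).1 (hFx y hy))
  · refine ((intervalIntegrable_iff_integrableOn_Ioc_of_le hcd).1 hFy).congr ?_
    filter_upwards [ae_restrict_mem measurableSet_Ioc] with y hy
    exact (hnorm y hy).symm

end IntervalIntegralSwap

section ArccosFamily

variable {c s : ℝ}

lemma hasDerivAt_arccos_div_one_add_mul (hc : 0 ≤ c) (hcs : c < 1 + s * c) :
    HasDerivAt (fun t => arccos (c / (1 + t * c)))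
      (c ^ 2 / ((1 + s * c) * √((1 + s * c) ^ 2 - c ^ 2))) s := by
  have hpos : 0 < 1 + s * c := hc.trans_lt hcs
  have hu : HasDerivAt (fun t => c / (1 + t * c)) (c * (-c / (1 + s * c) ^ 2)) s := by
    have hden : HasDerivAt (fun t : ℝ => 1 + t * c) c s := by
      simpa using ((hasDerivAt_id s).mul_const c).const_add 1
    simpa [div_eq_mul_inv] using (hden.inv hpos.ne').const_mul c
  have hu0 : 0 ≤ c / (1 + s * c) := div_nonneg hc hpos.le
  have hu1 : c / (1 + s * c) < 1 := (div_lt_one hpos).2 hcs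
  have hD : 0 < (1 + s * c) ^ 2 - c ^ 2 := by nlinarith
  have hsqrt : √(1 - (c / (1 + s * c)) ^ 2) = √((1 + s * c) ^ 2 - c ^ 2) / (1 + s * c) := by
    have : 1 - (c / (1 + s * c)) ^ 2 = ((1 + s * c) ^ 2 - c ^ 2) / (1 + s * c) ^ 2 := by
      rw [div_pow, one_sub_div (pow_ne_zero 2 hpos.ne')]
    rw [this, sqrt_div hD.le, sqrt_sq hpos.le]
  refine ((hasDerivAt_arccos (by linarith) hu1.ne).comp s hu).congr_deriv ?_
  have := sqrt_pos.2 hD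
  rw [hsqrt]
  field_simp

lemma arccos_kernel_nonneg (hc : 0 ≤ c) (hs : 0 ≤ s) :
    0 ≤ c ^ 2 / ((1 + s * c) * √((1 + s * c) ^ 2 - c ^ 2)) := by
  have : 0 ≤ s * c := mul_nonneg hs hc
  positivity

lemma lt_one_add_mul_self (hc : c ∈ Icc 0 1) (hs : 0 < s) : c < 1 + s * c := by
  rcases hc.1.eq_or_lt with rfl | hc0
  · simp
  · nlinarith [mul_pos hs hc0, hc.2]

lemma continuousOn_arccos_div_one_add_mul (hc : 0 ≤ c) :
    ContinuousOn (fun t => arccos (c / (1 + t * c))) (Ici 0) := by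
  refine continuous_arccos.comp_continuousOn (continuousOn_const.div (by fun_prop) ?_)
  intro t ht
  have : 0 ≤ t * c := mul_nonneg ht hc
  positivity

variable {b : ℝ}

lemma intervalIntegrable_arccos_kernel (hc : c ∈ Icc 0 1) (hb : 0 ≤ b) :
    IntervalIntegrable (fun s => c ^ 2 / ((1 + s * c) * √((1 + s * c) ^ 2 - c ^ 2)))
      volume 0 b := by
  rw [intervalIntegrable_iff_integrableOn_Ioc_of_le hb]
  exact intervalIntegral.integrableOn_deriv_of_nonneg
    ((continuousOn_arccos_div_one_add_mul hc.1).mono Icc_subset_Ici_self)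
    (fun s hs => hasDerivAt_arccos_div_one_add_mul hc.1 (lt_one_add_mul_self hc hs.1))
    (fun s hs => arccos_kernel_nonneg hc.1 hs.1.le)

lemma integral_arccos_kernel (hc : c ∈ Icc 0 1) (hb : 0 ≤ b) :
    ∫ s in (0:ℝ)..b, c ^ 2 / ((1 + s * c) * √((1 + s * c) ^ 2 - c ^ 2))
      = arccos (c / (1 + b * c)) - arccos c := by
  rw [intervalIntegral.integral_eq_sub_of_hasDerivAt_of_le hb
    ((continuousOn_arccos_div_one_add_mul hc.1).mono Icc_subset_Ici_self)
    (fun s hs => hasDerivAt_arccos_div_one_add_mul hc.1 (lt_one_add_mul_self hc hs.1))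
    (intervalIntegrable_arccos_kernel hc hb)]
  simp

end ArccosFamily

theorem coxeter_ftc_identity :
    (∫ θ in (0:ℝ)..(π/2), Real.arccos (Real.cos θ / (1 + 2 * Real.cos θ)))
      - (∫ θ in (0:ℝ)..(π/2), Real.arccos (Real.cos θ))
      = ∫ s in (0:ℝ)..2, ∫ θ in (0:ℝ)..(π/2),
          Real.cos θ ^ 2 /
            ((1 + s * Real.cos θ) *
              Real.sqrt ((1 + s * Real.cos θ) ^ 2 - Real.cos θ ^ 2)) := by
  have hpi : (0:ℝ) ≤ π / 2 := by positivity
  have hcos : ∀ θ ∈ uIcc 0 (π / 2), cos θ ∈ Icc 0 1 := fun θ hθ => by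
    rw [uIcc_of_le hpi] at hθ
    exact ⟨cos_nonneg_of_mem_Icc ⟨by linarith [hθ.1, pi_pos], hθ.2⟩, cos_le_one θ⟩
  have hinner : EqOn (fun θ => ∫ s in (0:ℝ)..2, cos θ ^ 2 /
        ((1 + s * cos θ) * √((1 + s * cos θ) ^ 2 - cos θ ^ 2)))
      (fun θ => arccos (cos θ / (1 + 2 * cos θ)) - arccos (cos θ)) (uIcc 0 (π / 2)) :=
    fun θ hθ => integral_arccos_kernel (hcos θ hθ) zero_le_two
  have hI₁ : IntervalIntegrable (fun θ => arccos (cos θ / (1 + 2 * cos θ))) volume 0 (π / 2) :=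
    ContinuousOn.intervalIntegrable <| continuous_arccos.comp_continuousOn <|
      continuous_cos.continuousOn.div (by fun_prop) fun θ hθ => by linarith [(hcos θ hθ).1]
  have hI₂ : IntervalIntegrable (fun θ => arccos (cos θ)) volume 0 (π / 2) :=
    (continuous_arccos.comp continuous_cos).intervalIntegrable _ _
  have hIoc : Ioc 0 (π / 2) ⊆ uIcc 0 (π / 2) := uIoc_of_le hpi ▸ uIoc_subset_uIcc
  rw [intervalIntegral_intervalIntegral_swap_of_nonneg zero_le_two hpi (by fun_prop)
      (fun s hs θ hθ => arccos_kernel_nonneg (hcos θ (hIoc hθ)).1 hs.1.le)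
      (fun θ hθ => intervalIntegrable_arccos_kernel (hcos θ (hIoc hθ)) zero_le_two)
      ((hI₁.sub hI₂).congr (hinner.symm.mono uIoc_subset_uIcc)),
    intervalIntegral.integral_congr hinner, intervalIntegral.integral_sub hI₁ hI₂]
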